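/- In LR-Subtraction Nim with S = {2k+3 : k ∈ ℤ≥0} ∪ {4} (i.e., all odd integers ≥ 3 together with 4), the outcomes are: L if n ∈ {0, 2, 3} or n is odd with n ≥ 7; R if n = 1; N if n ∈ {4, 5} or n is even with n ≥ 6. -/

import Mathlib

open scoped Classical

inductive Outcome : Type
  | L | R | N | P
deriving DecidableEq

/-- Outcome determined from the set of outcomes of the options of a non-terminal position. -/
noncomputable def fromOptions (T : Set Outcome) : Outcome :=
  if Outcome.L ∈ T ∧ T ⊆ {Outcome.L, Outcome.N} then Outcome.L
  else if Outcome.R ∈ T ∧ T ⊆ {Outcome.R, Outcome.N} then Outcome.R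
  else if T = {Outcome.N} then Outcome.P
  else Outcome.N

/-- Outcome of Ending Partizan Subtraction Nim with removable set `S ⊆ ℤ≥2` and
terminal assignment `W`. -/
noncomputable def epOutcome (S : Set ℕ) (hS : ∀ s ∈ S, 2 ≤ s) (W : ℕ → Outcome) : ℕ → Outcome :=
  fun n => Nat.strongRecOn n (fun n ih =>
    if ∃ s ∈ S, s ≤ n then
      fromOptions {o | ∃ s, ∃ hs : s ∈ S, ∃ hsn : s ≤ n,
        o = ih (n - s) (by have := hS s hs; omega)}
    else W n)

/-- Outcome of `LR`-Subtraction Nim: at a terminal position, Left wins if the number of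
remaining tokens is even, Right wins if it is odd. -/
noncomputable def lrOutcome (S : Set ℕ) (hS : ∀ s ∈ S, 2 ≤ s) : ℕ → Outcome :=
  epOutcome S hS (fun n => if Even n then Outcome.L else Outcome.R)

lemma epOutcome_eq (S : Set ℕ) (hS : ∀ s ∈ S, 2 ≤ s) (W : ℕ → Outcome) (n : ℕ) :
    epOutcome S hS W n =
      if ∃ s ∈ S, s ≤ n then
        fromOptions {o | ∃ s, ∃ hs : s ∈ S, ∃ hsn : s ≤ n, o = epOutcome S hS W (n - s)}
      else W n := by
  conv_lhs => rw [epOutcome]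
  rw [Nat.strongRecOn_eq]; rfl

lemma fromOptions_L {T : Set Outcome} (h1 : Outcome.L ∈ T)
    (h2 : T ⊆ {Outcome.L, Outcome.N}) : fromOptions T = Outcome.L :=
  if_pos ⟨h1, h2⟩

lemma fromOptions_N {T : Set Outcome} (h1 : Outcome.L ∈ T) (h2 : Outcome.R ∈ T) :
    fromOptions T = Outcome.N := by
  rw [fromOptions, if_neg, if_neg, if_neg]
  · intro h; have := h ▸ h1; simp at this
  · rintro ⟨-, hsub⟩; have := hsub h1; simp at this
  · rintro ⟨-, hsub⟩; have := hsub h2; simp at this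

def ff : ℕ → Outcome := fun n =>
  if n = 1 then Outcome.R
  else if n = 4 ∨ n = 5 ∨ (Even n ∧ 6 ≤ n) then Outcome.N else Outcome.L

lemma ff_ne_one {m : ℕ} (h : m ≠ 1) : ff m = Outcome.L ∨ ff m = Outcome.N := by
  rw [ff, if_neg h]; split_ifs <;> simp

lemma key (S : Set ℕ) (hSdef : S = {m : ℕ | Odd m ∧ 3 ≤ m} ∪ {4})
    (hS : ∀ s ∈ S, 2 ≤ s) : ∀ n, lrOutcome S hS n = ff n := by
  intro n
  induction n using Nat.strong_induction_on with
  | _ n ih =>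
  have hmem : ∀ s, s ∈ S ↔ (Odd s ∧ 3 ≤ s) ∨ s = 4 := by
    intro s; rw [hSdef]; rfl
  have h3S : (3 : ℕ) ∈ S := (hmem 3).2 (Or.inl ⟨⟨1, rfl⟩, le_refl 3⟩)
  have h4S : (4 : ℕ) ∈ S := (hmem 4).2 (Or.inr rfl)
  rw [lrOutcome, epOutcome_eq]
  by_cases hn : 3 ≤ n
  · rw [if_pos ⟨3, h3S, hn⟩]
    have hT : {o | ∃ s, ∃ hs : s ∈ S, ∃ hsn : s ≤ n,
        o = epOutcome S hS (fun n => if Even n then Outcome.L else Outcome.R) (n - s)} =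
        {o | ∃ s, ∃ hs : s ∈ S, ∃ hsn : s ≤ n, o = ff (n - s)} := by
      ext o
      simp only [Set.mem_setOf_eq]
      constructor <;> rintro ⟨s, hs, hsn, rfl⟩
      · exact ⟨s, hs, hsn, ih (n - s) (by have := hS s hs; omega)⟩
      · exact ⟨s, hs, hsn, (ih (n - s) (by have := hS s hs; omega)).symm⟩
    rw [hT]
    have hmemT : ∀ s, s ∈ S → s ≤ n → ff (n - s) ∈
        {o | ∃ s, ∃ hs : s ∈ S, ∃ hsn : s ≤ n, o = ff (n - s)} :=
      fun s hs hsn => ⟨s, hs, hsn, rfl⟩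
    rcases Nat.even_or_odd n with he | ho
    · -- n even, n ≥ 4 : cases n = 4 or n ≥ 6
      have he2 := Nat.even_iff.1 he
      by_cases h4 : n = 4
      · subst h4
        rw [ff]
        norm_num
        exact fromOptions_N (by have := hmemT 4 h4S (by norm_num); simpa [ff] using this)
          (by have := hmemT 3 h3S (by norm_num); simpa [ff] using this)
      · -- n even ≥ 6
        have h6 : 6 ≤ n := by omega
        have hL : Outcome.L ∈ {o | ∃ s, ∃ hs : s ∈ S, ∃ hsn : s ≤ n, o = ff (n - s)} := by
          have hmem3 : n - 3 ∈ S := (hmem _).2 (Or.inl ⟨Nat.odd_iff.2 (by omega), by omega⟩)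
          have := hmemT (n - 3) hmem3 (by omega)
          have h3 : n - (n - 3) = 3 := by omega
          rw [h3] at this
          simpa [ff] using this
        have hR : Outcome.R ∈ {o | ∃ s, ∃ hs : s ∈ S, ∃ hsn : s ≤ n, o = ff (n - s)} := by
          have hmem1 : n - 1 ∈ S := (hmem _).2 (Or.inl ⟨Nat.odd_iff.2 (by omega), by omega⟩)
          have := hmemT (n - 1) hmem1 (by omega)
          have h1 : n - (n - 1) = 1 := by omega
          rw [h1] at this
          simpa [ff] using this
        rw [fromOptions_N hL hR, ff, if_neg (by omega)]
        rw [if_pos (Or.inr (Or.inr ⟨he, h6⟩))]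
    · -- n odd, n ≥ 3 : cases n = 3, 5, or ≥ 7
      have ho2 := Nat.odd_iff.1 ho
      have hnS : n ∈ S := (hmem _).2 (Or.inl ⟨ho, hn⟩)
      have hL : Outcome.L ∈ {o | ∃ s, ∃ hs : s ∈ S, ∃ hsn : s ≤ n, o = ff (n - s)} := by
        have := hmemT n hnS le_rfl
        simpa [ff] using this
      by_cases h5 : n = 5
      · subst h5
        have hR : Outcome.R ∈ {o | ∃ s, ∃ hs : s ∈ S, ∃ hsn : s ≤ (5:ℕ), o = ff (5 - s)} := by
          have := hmemT 4 h4S (by norm_num)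
          simpa [ff] using this
        rw [fromOptions_N hL hR]; rfl
      · -- n odd, n = 3 or n ≥ 7 : outcome L
        have hsub : {o | ∃ s, ∃ hs : s ∈ S, ∃ hsn : s ≤ n, o = ff (n - s)} ⊆
            {Outcome.L, Outcome.N} := by
          rintro o ⟨s, hs, hsn, rfl⟩
          have hne : n - s ≠ 1 := by
            rcases (hmem s).1 hs with ⟨hodd, h3s⟩ | h4
            · have := Nat.odd_iff.1 hodd; omega
            · omega
          rcases ff_ne_one hne with h | h <;> simp [h]
        rw [fromOptions_L hL hsub, ff, if_neg (by omega), if_neg (by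
          rintro (h | h | ⟨he, -⟩) <;> first | omega | exact absurd (Nat.even_iff.1 he) (by omega))]
  · -- terminal: n ≤ 2
    rw [if_neg]
    · interval_cases n <;> simp [ff]
    · rintro ⟨s, hs, hsn⟩
      rcases (hmem s).1 hs with ⟨-, h3s⟩ | h4 <;> omega

theorem stmt17 (S : Set ℕ) (hSdef : S = {m : ℕ | Odd m ∧ 3 ≤ m} ∪ {4})
    (hS : ∀ s ∈ S, 2 ≤ s) (n : ℕ) :
    ((n = 0 ∨ n = 2 ∨ n = 3 ∨ (Odd n ∧ 7 ≤ n)) → lrOutcome S hS n = Outcome.L) ∧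
    (n = 1 → lrOutcome S hS n = Outcome.R) ∧
    ((n = 4 ∨ n = 5 ∨ (Even n ∧ 6 ≤ n)) → lrOutcome S hS n = Outcome.N) := by
  rw [key S hSdef hS n]
  refine ⟨?_, ?_, ?_⟩
  · rintro (rfl | rfl | rfl | ⟨ho, h7⟩)
    · rfl
    · rfl
    · rfl
    · have := Nat.odd_iff.1 ho
      rw [ff, if_neg (by omega), if_neg (by
        rintro (h | h | ⟨he, -⟩) <;> first | omega | exact absurd (Nat.even_iff.1 he) (by omega))]
  · rintro rfl; rfl
  · rintro (rfl | rfl | ⟨he, h6⟩)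
    · rfl
    · rfl
    · rw [ff, if_neg (by omega), if_pos (Or.inr (Or.inr ⟨he, h6⟩))]
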